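/- If the graph Γ fails Condition [*] (i.e. either E = ∅, or there is a bipartition of V into stable sets C, D with a node v₀ ∈ C linked to all nodes of D), and P(Γ) has at least two vertices, then P(Γ) admits a combinatorial automorphism that does not fix the vertex χ(∅). -/

import Mathlib

open Set

noncomputable section

variable {V : Type*}

/-- Characteristic vector of a set of nodes. -/
def chi (S : Set V) : V → ℝ := S.indicator (fun _ => (1 : ℝ))

/-- The candidate vertex set of the polytope `P(Γ)`. -/
def polyVerts (G : SimpleGraph V) : Set (V → ℝ) :=
  {x | x = chi (∅ : Set V) ∨ (∃ v : V, x = chi {v}) ∨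
        (∃ u w : V, G.Adj u w ∧ x = chi {u, w})}

/-- The polytope `P(Γ)`. -/
def poly (G : SimpleGraph V) : Set (V → ℝ) := convexHull ℝ (polyVerts G)

/-- Two points are adjacent vertices of a convex set `P` when the segment
joining them is a (1-dimensional) face, i.e. an extreme subset of `P`. -/
def AdjVert (P : Set (V → ℝ)) (p q : V → ℝ) : Prop :=
  p ≠ q ∧ IsExtreme ℝ P (segment ℝ p q)

/-- A combinatorial automorphism of `P`: a bijection of the vertex (extreme point)
set of `P` mapping the vertex set of each face onto the vertex set of some face. -/
def IsCombAut (P : Set (V → ℝ)) (σ : (V → ℝ) → (V → ℝ)) : Prop :=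
  Set.BijOn σ (P.extremePoints ℝ) (P.extremePoints ℝ) ∧
  ∀ F : Set (V → ℝ), IsExtreme ℝ P F →
    ∃ F' : Set (V → ℝ), IsExtreme ℝ P F' ∧
      σ '' (F ∩ P.extremePoints ℝ) = F' ∩ P.extremePoints ℝ

/-- An automorphism of the skeleton of `P`: a bijection of the vertex set of `P`
preserving adjacency (in both directions). -/
def IsSkelAut (P : Set (V → ℝ)) (σ : (V → ℝ) → (V → ℝ)) : Prop :=
  Set.BijOn σ (P.extremePoints ℝ) (P.extremePoints ℝ) ∧
  ∀ p ∈ P.extremePoints ℝ, ∀ q ∈ P.extremePoints ℝ,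
    (AdjVert P p q ↔ AdjVert P (σ p) (σ q))

/-!
Take a bipartition `V = C ⊔ D` into stable sets with `v₀ ∈ C` adjacent to every node of `D`
(if `E = ∅`, take `C = V`). The affine involution replacing the coordinate `x v₀` by
`1 - ∑ c ∈ C, x c` permutes the points spanning `P(Γ)`: it swaps `χ ∅ ↔ χ {v₀}` and
`χ {w} ↔ χ {v₀, w}` for `w ∈ D`, and fixes every other `χ {v}` and `χ {u, w}` (each edge has exactly
one end in `C`). So it maps `P(Γ)` onto itself, and an injective affine map of a convex set onto
itself carries faces to faces.
-/

section AffineImage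

variable {𝕜 E F : Type*} [Ring 𝕜] [PartialOrder 𝕜] [IsOrderedRing 𝕜]
  [AddCommGroup E] [Module 𝕜 E] [AddCommGroup F] [Module 𝕜 F]
  {f : E →ᵃ[𝕜] F}

theorem IsExtreme.image_affineMap (hf : Function.Injective f) {A B : Set E}
    (h : IsExtreme 𝕜 A B) : IsExtreme 𝕜 (f '' A) (f '' B) := by
  refine ⟨image_mono h.1, ?_⟩
  rintro _ ⟨x₁, hx₁, rfl⟩ _ ⟨x₂, hx₂, rfl⟩ _ ⟨x, hx, rfl⟩ hseg
  rw [← image_openSegment, hf.mem_set_image] at hseg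
  exact mem_image_of_mem f (h.2 hx₁ hx₂ hx hseg)

theorem image_extremePoints_affineMap (hf : Function.Injective f) (A : Set E) :
    f '' A.extremePoints 𝕜 = (f '' A).extremePoints 𝕜 := by
  refine Subset.antisymm ?_ ?_
  · rintro _ ⟨x, hx, rfl⟩
    rw [← isExtreme_singleton, ← image_singleton] at *
    exact hx.image_affineMap hf
  · rintro _ ⟨⟨x, hx, rfl⟩, hext⟩
    refine ⟨x, ⟨hx, fun x₁ hx₁ x₂ hx₂ hseg => ?_⟩, rfl⟩
    exact hf <| hext (mem_image_of_mem f hx₁) (mem_image_of_mem f hx₂)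
      (image_openSegment 𝕜 f x₁ x₂ ▸ mem_image_of_mem f hseg)

end AffineImage

theorem isCombAut_of_affineMap {P : Set (V → ℝ)} (f : (V → ℝ) →ᵃ[ℝ] (V → ℝ))
    (hf : Function.Injective f) (hP : f '' P = P) : IsCombAut P f := by
  have hext : f '' P.extremePoints ℝ = P.extremePoints ℝ := by
    rw [image_extremePoints_affineMap hf, hP]
  refine ⟨⟨mapsTo_iff_image_subset.2 hext.subset, hf.injOn, hext.symm.subset⟩, fun F hF => ?_⟩
  refine ⟨f '' F, hP ▸ hF.image_affineMap hf, ?_⟩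
  rw [image_inter hf, hext]

section Switching

variable [DecidableEq V] (C : Finset V) (v₀ : V)

def switching : (V → ℝ) →ᵃ[ℝ] (V → ℝ) :=
  (LinearMap.id - LinearMap.single ℝ (fun _ => ℝ) v₀ ∘ₗ
      (∑ c ∈ C, LinearMap.proj (R := ℝ) (φ := fun _ : V => ℝ) c +
        LinearMap.proj v₀)).toAffineMap +
    AffineMap.const ℝ (V → ℝ) (Pi.single v₀ 1 : V → ℝ)

theorem switching_apply (x : V → ℝ) :
    switching C v₀ x = Function.update x v₀ (1 - ∑ c ∈ C, x c) := by
  ext v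
  rcases eq_or_ne v v₀ with rfl | hv
  · simp [switching, neg_add_eq_sub]
  · simp [switching, hv]

variable {C v₀}

theorem switching_involutive (hv₀ : v₀ ∈ C) : Function.Involutive (switching C v₀) := by
  intro x
  ext v
  rcases eq_or_ne v v₀ with rfl | hv
  · simp only [switching_apply, Function.update_self, Finset.sum_update_of_mem hv₀,
      Finset.sum_eq_add_sum_sdiff_singleton_of_mem hv₀]
    ring
  · simp [switching_apply, hv]

theorem switching_zero : switching C v₀ 0 = Pi.single v₀ 1 := by
  ext v
  rcases eq_or_ne v v₀ with rfl | hv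
  · simp [switching_apply]
  · simp [switching_apply, hv]

theorem switching_single_of_mem {v : V} (hv : v ∈ C) (hne : v ≠ v₀) :
    switching C v₀ (Pi.single v 1) = Pi.single v 1 := by
  simp [switching_apply, Finset.sum_pi_single', hv, hne]

theorem switching_single_of_notMem (hv₀ : v₀ ∈ C) {w : V} (hw : w ∉ C) :
    switching C v₀ (Pi.single w 1) = Pi.single v₀ 1 + Pi.single w 1 := by
  have hne : w ≠ v₀ := by rintro rfl; exact hw hv₀
  ext v
  rcases eq_or_ne v v₀ with rfl | hv
  · simp [switching_apply, Finset.sum_pi_single', hw, hne]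
  · simp [switching_apply, hv]

theorem switching_pair (hv₀ : v₀ ∈ C) {u w : V} (hu : u ∈ C) (hne : u ≠ v₀) (hw : w ∉ C) :
    switching C v₀ (Pi.single u 1 + Pi.single w 1) = Pi.single u 1 + Pi.single w 1 := by
  have hne' : w ≠ v₀ := by rintro rfl; exact hw hv₀
  ext v
  rcases eq_or_ne v v₀ with rfl | hv
  · simp [switching_apply, Finset.sum_add_distrib, Finset.sum_pi_single', hu, hw, hne, hne']
  · simp [switching_apply, hv]

end Switching

theorem chi_empty : chi (∅ : Set V) = 0 := indicator_empty _

theorem chi_singleton [DecidableEq V] (v : V) : chi {v} = Pi.single v 1 := by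
  ext w
  by_cases h : w = v <;> simp [chi, h]

theorem chi_pair [DecidableEq V] {u w : V} (h : u ≠ w) :
    chi {u, w} = Pi.single u 1 + Pi.single w 1 := by
  ext v
  by_cases hu : v = u <;> by_cases hw : v = w <;> simp_all [chi]

theorem switching_image_polyVerts [DecidableEq V] (G : SimpleGraph V) {C : Finset V} {v₀ : V}
    (hv₀ : v₀ ∈ C) (hcross : ∀ u w, G.Adj u w → (u ∈ C ↔ w ∉ C))
    (hlink : ∀ w ∉ C, G.Adj v₀ w) :
    switching C v₀ '' polyVerts G = polyVerts G := by
  have hinv := switching_involutive hv₀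
  suffices hmaps : MapsTo (switching C v₀) (polyVerts G) (polyVerts G) from
    (mapsTo_iff_image_subset.1 hmaps).antisymm fun x hx => ⟨_, hmaps hx, hinv x⟩
  have hsingle : ∀ w ∉ C, switching C v₀ (chi {w}) = chi {v₀, w} := fun w hw => by
    rw [chi_singleton, chi_pair (G.ne_of_adj (hlink w hw)), switching_single_of_notMem hv₀ hw]
  rintro x (rfl | ⟨v, rfl⟩ | ⟨u, w, huw, rfl⟩)
  · exact Or.inr <| Or.inl ⟨v₀, by rw [chi_empty, switching_zero, chi_singleton]⟩
  · by_cases hvC : v ∈ C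
    · rcases eq_or_ne v v₀ with rfl | hne
      · left
        rw [chi_empty, chi_singleton, ← switching_zero, hinv]
      · exact Or.inr <| Or.inl ⟨v, by rw [chi_singleton, switching_single_of_mem hvC hne]⟩
    · exact Or.inr <| Or.inr ⟨v₀, v, hlink v hvC, hsingle v hvC⟩
  · wlog huC : u ∈ C generalizing u w
    · rw [pair_comm]
      exact this w u huw.symm (by simpa [hcross u w huw] using huC)
    have hwC : w ∉ C := (hcross u w huw).1 huC
    rcases eq_or_ne u v₀ with rfl | hne
    · exact Or.inr <| Or.inl ⟨w, by rw [← hsingle w hwC, hinv]⟩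
    · refine Or.inr <| Or.inr ⟨u, w, huw, ?_⟩
      rw [chi_pair (G.ne_of_adj huw), switching_pair hv₀ huC hne hwC]

theorem stmt13_general [Fintype V] [Nonempty V] (G : SimpleGraph V)
    (hfail : G.edgeSet = ∅ ∨
      ∃ (C D : Set V) (v₀ : V),
        C ∪ D = Set.univ ∧ Disjoint C D ∧
        (∀ a ∈ C, ∀ b ∈ C, ¬ G.Adj a b) ∧
        (∀ a ∈ D, ∀ b ∈ D, ¬ G.Adj a b) ∧
        v₀ ∈ C ∧ (∀ b ∈ D, G.Adj v₀ b)) :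
    ∃ σ : (V → ℝ) → (V → ℝ),
      IsCombAut (poly G) σ ∧ σ (chi (∅ : Set V)) ≠ chi (∅ : Set V) := by
  classical
  obtain ⟨C, v₀, hv₀, hcross, hlink⟩ : ∃ (C : Finset V) (v₀ : V), v₀ ∈ C ∧
      (∀ u w, G.Adj u w → (u ∈ C ↔ w ∉ C)) ∧ ∀ w ∉ C, G.Adj v₀ w := by
    rcases hfail with hE | ⟨C, D, v₀, hCD, hdisj, hC, hD, hv₀, hlink⟩
    · obtain rfl := SimpleGraph.edgeSet_eq_empty.1 hE
      exact ⟨Finset.univ, Classical.arbitrary V, Finset.mem_univ _, fun _ _ h => h.elim, by simp⟩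
    · obtain rfl : D = Cᶜ := (IsCompl.compl_eq ⟨hdisj, codisjoint_iff.2 hCD⟩).symm
      refine ⟨C.toFinset, v₀, by simpa using hv₀, fun u w huw => ?_, by simpa using hlink⟩
      simp only [Set.mem_toFinset]
      exact ⟨fun hu hw => hC u hu w hw huw, fun hw => by_contra fun hu => hD u hu w hw huw⟩
  refine ⟨switching C v₀, isCombAut_of_affineMap _ (switching_involutive hv₀).injective ?_, ?_⟩
  · rw [poly, AffineMap.image_convexHull, switching_image_polyVerts G hv₀ hcross hlink]
  · simp [chi_empty, switching_zero]

theorem stmt13 [Fintype V] [Nonempty V] (G : SimpleGraph V)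
    (hfail : G.edgeSet = ∅ ∨
      ∃ (C D : Set V) (v₀ : V),
        C ∪ D = Set.univ ∧ Disjoint C D ∧
        (∀ a ∈ C, ∀ b ∈ C, ¬ G.Adj a b) ∧
        (∀ a ∈ D, ∀ b ∈ D, ¬ G.Adj a b) ∧
        v₀ ∈ C ∧ (∀ b ∈ D, G.Adj v₀ b))
    (htwo : ((poly G).extremePoints ℝ).Nontrivial) :
    ∃ σ : (V → ℝ) → (V → ℝ),
      IsCombAut (poly G) σ ∧ σ (chi (∅ : Set V)) ≠ chi (∅ : Set V) :=
  stmt13_general G hfail
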